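/- arXiv:1806.08469 — 3 statements merged into one kernel-verified Lean document; each statement's English description precedes it below -/
import Mathlib

section
/- Let p be a prime, q > 1 a power of p and k ≥ 2 an integer. Write P^{(k)}(X) = det(I − X·U^{(k)}) = Σ_{n=0}^{k−1} a_n^{(k)} X^n ∈ 𝔽_q[t][X]. Then a_0^{(k)} = 1, a_1^{(k)} ≡ −1 (mod t), and t divides a_n^{(k)} for every n ≥ 2. (In particular the trace of U^{(k)} is congruent to 1 modulo t.) -/
/-!
Every entry of the `j`-th column of `U^{(k)}` is divisible by `t^j`, so modulo `t` only the
first column survives, and its top entry is `C(k-2, 0) = 1`. A matrix supported on one column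
has rank one, so by the matrix determinant lemma `det(I - X·U^{(k)}) ≡ 1 - X (mod t)`.
The constant term is `det I = 1` exactly, and the coefficient of `X` is `-tr U^{(k)}`.
-/

open Polynomial

noncomputable section DrinfeldGM

/-- Integer-argument binomial coefficient `C(c,d)`, equal to `0` whenever any of
`c`, `d`, `c - d` is negative. -/
def intChoose (c d : ℤ) : ℤ :=
  if 0 ≤ c ∧ 0 ≤ d ∧ d ≤ c then (Nat.choose c.toNat d.toNat : ℤ) else 0

/-- The `(i,j)` entry of the matrix of the `U`-operator on `S_k(Γ₁(t))` in the
Bandini–Valentino basis (here `t` is the polynomial variable `X`).  For `i = j` it is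
`(-t)^j C(k-2-j, j)`; for `i = j + h(q-1)` with `h ≠ 0` (equivalently `(q-1) ∣ i - j`,
`i ≠ j`, in which case `h(q-1) = i - j`) it is
`-t^j (C(k-2-i, j-i) + (-1)^{j+1} C(k-2-i, j))`; and it is `0` otherwise. -/
def Uent (F : Type*) [Field F] (q k : ℕ) (i j : ℕ) : Polynomial F :=
  if i = j then
    (-Polynomial.X : Polynomial F) ^ j * ((intChoose ((k : ℤ) - 2 - (j : ℤ)) (j : ℤ) : ℤ) : Polynomial F)
  else if ((q : ℤ) - 1) ∣ ((i : ℤ) - (j : ℤ)) then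
    -((Polynomial.X : Polynomial F) ^ j *
      ((intChoose ((k : ℤ) - 2 - (i : ℤ)) ((j : ℤ) - (i : ℤ)) +
        (-1) ^ (j + 1) * intChoose ((k : ℤ) - 2 - (i : ℤ)) (j : ℤ) : ℤ) : Polynomial F))
  else 0

/-- The representing matrix `U^{(k)} ∈ M_{k-1}(𝔽_q[t])` of the `U`-operator on
`S_k(Γ₁(t))`, rows and columns indexed by `0, …, k-2`. -/
def Umat (F : Type*) [Field F] (q k : ℕ) :
    Matrix (Fin (k - 1)) (Fin (k - 1)) (Polynomial F) :=
  Matrix.of fun i j => Uent F q k (i : ℕ) (j : ℕ)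

/-- A matrix over `𝔽_q[[t]]` is *glissando* if every entry of its `j`-th column is an
`𝔽_q`-multiple of `t^j`. -/
def Glissando {F : Type*} [Field F] {m n : ℕ}
    (B : Matrix (Fin m) (Fin n) (PowerSeries F)) : Prop :=
  ∀ i j, ∃ c : F, B i j = PowerSeries.C c * (PowerSeries.X : PowerSeries F) ^ (j : ℕ)

/-- The inclusion `𝔽_q[t] → 𝔽_q[[t]]`. -/
def polyToPS (F : Type*) [Field F] : Polynomial F →+* PowerSeries F :=
  Polynomial.coeToPowerSeries.ringHom

/-- The inclusion of `𝔽_q[[t]]` into a fixed algebraic closure `K̄` of `K = 𝔽_q((t))`. -/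
def psToKbar (F : Type*) [Field F] :
    PowerSeries F →+* AlgebraicClosure (LaurentSeries F) :=
  (algebraMap (LaurentSeries F) (AlgebraicClosure (LaurentSeries F))).comp
    (algebraMap (PowerSeries F) (LaurentSeries F))

/-- The inclusion `𝔽_q[t] → K̄`. -/
def polyToKbar (F : Type*) [Field F] :
    Polynomial F →+* AlgebraicClosure (LaurentSeries F) :=
  (psToKbar F).comp (polyToPS F)

/-- The element `t` of `K̄`. -/
def tbar (F : Type*) [Field F] : AlgebraicClosure (LaurentSeries F) :=
  psToKbar F PowerSeries.X

/-- Integrality over `𝔽_q[[t]]` of an element of `K̄`. -/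
def IntegralPS (F : Type*) [Field F] (x : AlgebraicClosure (LaurentSeries F)) : Prop :=
  letI : Algebra (PowerSeries F) (AlgebraicClosure (LaurentSeries F)) := (psToKbar F).toAlgebra
  IsIntegral (PowerSeries F) x

/-- `HasVal F λ α` says that `λ ∈ K̄` is nonzero and has valuation `α` for the unique
extension `v` to `K̄` of the `t`-adic valuation with `v(t) = 1`: writing `α = a/b` with
`b > 0`, this means that both `λ^b/t^a` and `t^a/λ^b` are integral over `𝔽_q[[t]]`. -/
def HasVal (F : Type*) [Field F] (lam : AlgebraicClosure (LaurentSeries F)) (α : ℚ) : Prop :=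
  lam ≠ 0 ∧ ∃ a b : ℤ, 0 < b ∧ α = (a : ℚ) / (b : ℚ) ∧
    IntegralPS F (lam ^ b / tbar F ^ a) ∧ IntegralPS F (tbar F ^ a / lam ^ b)

/-- `d(k, α)`: the number of roots `λ` of `det(X·I - U^{(k)})` in `K̄` with `v(λ) = α`,
counted with multiplicity.  This is the dimension of the slope-`α` generalized eigenspace
of the `U`-operator on `S_k(Γ₁(t))`. -/
def dDim (F : Type*) [Field F] (q k : ℕ) (α : ℚ) : ℕ :=
  letI := Classical.decPred fun lam : AlgebraicClosure (LaurentSeries F) => HasVal F lam α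
  Multiset.card <| Multiset.filter (fun lam => HasVal F lam α) <|
    (((Umat F q k).charpoly).map (polyToKbar F)).roots

/-- `det(I - t^l X B)` for a square matrix `B` over `𝔽_q[[t]]`, as a polynomial in `X`
over `𝔽_q[[t]]`. -/
def charSeriesTw (F : Type*) [Field F] {m : ℕ} (l : ℕ)
    (B : Matrix (Fin m) (Fin m) (PowerSeries F)) : Polynomial (PowerSeries F) :=
  Matrix.det (1 - (Polynomial.C ((PowerSeries.X : PowerSeries F) ^ l) * Polynomial.X) •
    B.map Polynomial.C)

/-- `det(I - X B)` for a square matrix `B` over `𝔽_q[[t]]`. -/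
def charSeriesPS (F : Type*) [Field F] {m : ℕ}
    (B : Matrix (Fin m) (Fin m) (PowerSeries F)) : Polynomial (PowerSeries F) :=
  Matrix.det (1 - (Polynomial.X : Polynomial (PowerSeries F)) • B.map Polynomial.C)

/-- `P^{(k)}(X) = det(I - X·U^{(k)}) ∈ 𝔽_q[t][X]`. -/
def Pser (F : Type*) [Field F] (q k : ℕ) : Polynomial (Polynomial F) :=
  Matrix.det (1 - (Polynomial.X : Polynomial (Polynomial F)) • (Umat F q k).map Polynomial.C)

namespace Matrix

variable {n R : Type*} [DecidableEq n] [CommRing R]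

theorem one_sub_X_smul_map_C (M : Matrix n n R) :
    1 - (X : R[X]) • M.map C = 1 + (X : R[X]) • (-M).map C := by
  rw [Matrix.map_neg _ (map_neg C), smul_neg, sub_eq_add_neg]

variable [Fintype n]

theorem det_one_sub_smul_of_eq_zero_of_ne {M : Matrix n n R} {j₀ : n}
    (hM : ∀ i j, j ≠ j₀ → M i j = 0) (r : R) :
    det (1 - r • M) = 1 - r * M j₀ j₀ := by
  have hrank : -(r • M) = replicateCol Unit (fun i => -(r * M i j₀)) *
      replicateRow Unit (Pi.single j₀ (1 : R)) := by
    ext i j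
    by_cases hj : j = j₀
    · subst hj; simp [mul_apply]
    · simp [mul_apply, hM i j hj, hj]
  rw [sub_eq_add_neg, hrank, det_one_add_replicateCol_mul_replicateRow]
  simp [sub_eq_add_neg]

theorem coeff_det_one_sub_X_smul_zero (M : Matrix n n R) :
    (det (1 - (X : R[X]) • M.map C)).coeff 0 = 1 := by
  rw [coeff_zero_eq_eval_zero, one_sub_X_smul_map_C, eval_det_add_X_smul, det_one, eval_one]

theorem coeff_det_one_sub_X_smul_one (M : Matrix n n R) :
    (det (1 - (X : R[X]) • M.map C)).coeff 1 = -trace M := by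
  rw [one_sub_X_smul_map_C, coeff_det_one_add_X_smul_one, trace_neg]

end Matrix

theorem Uent_zero_zero (F : Type*) [Field F] (q : ℕ) {k : ℕ} (hk : 2 ≤ k) :
    Uent F q k 0 0 = 1 := by
  have hchoose : intChoose ((k : ℤ) - 2) 0 = 1 := by
    rw [intChoose, if_pos (by omega)]
    simp
  simp [Uent, hchoose]

theorem Uent_eval_zero_of_ne_zero (F : Type*) [Field F] (q k i : ℕ) {j : ℕ} (hj : j ≠ 0) :
    (Uent F q k i j).eval 0 = 0 := by
  unfold Uent
  split_ifs <;> simp [zero_pow hj]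

theorem Pser_map_evalRingHom_zero (F : Type*) [Field F] (q : ℕ) {k : ℕ} (hk : 2 ≤ k) :
    (Pser F q k).map (evalRingHom 0) = 1 - X := by
  set U₀ := (Umat F q k).map (evalRingHom 0)
  let i₀ : Fin (k - 1) := ⟨0, by omega⟩
  have hcol : ∀ i j, j ≠ i₀ → U₀ i j = 0 := fun i j hj =>
    Uent_eval_zero_of_ne_zero F q k i fun h => hj (Fin.ext h)
  have hU₀ : U₀ i₀ i₀ = 1 := by simp [U₀, i₀, Umat, Uent_zero_zero F q hk]
  have hmap : (1 - (X : (Polynomial F)[X]) • (Umat F q k).map C).map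
      (mapRingHom (evalRingHom 0)) = 1 - (X : F[X]) • U₀.map C := by
    ext i j
    simp [U₀, Matrix.one_apply, apply_ite]
  rw [Pser, ← coe_mapRingHom, RingHom.map_det, RingHom.mapMatrix_apply, hmap,
    Matrix.det_one_sub_smul_of_eq_zero_of_ne (j₀ := i₀) (fun i j hj => by simp [hcol i j hj]),
    Matrix.map_apply, hU₀, map_one, mul_one]

theorem trace_Umat (F : Type*) [Field F] (q k : ℕ) :
    Matrix.trace (Umat F q k) = -(Pser F q k).coeff 1 := by
  rw [Pser, Matrix.coeff_det_one_sub_X_smul_one, neg_neg]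

theorem Pser_coeff_mod_t_general
    (q : ℕ)
    (F : Type) [Field F]
    (k : ℕ) (hk : 2 ≤ k) :
    (Pser F q k).coeff 0 = 1 ∧
    (Polynomial.X : Polynomial F) ∣ ((Pser F q k).coeff 1 + 1) ∧
    (∀ n : ℕ, 2 ≤ n → (Polynomial.X : Polynomial F) ∣ (Pser F q k).coeff n) ∧
    (Polynomial.X : Polynomial F) ∣ (Matrix.trace (Umat F q k) - 1) := by
  have hcoeff (n : ℕ) : ((Pser F q k).coeff n).eval 0 = (1 - X : F[X]).coeff n := by
    rw [← Pser_map_evalRingHom_zero F q hk, coeff_map, coe_evalRingHom]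
  have hcoeff_one : X ∣ (Pser F q k).coeff 1 + 1 := by
    simp [X_dvd_iff, coeff_zero_eq_eval_zero, hcoeff, coeff_one]
  refine ⟨Matrix.coeff_det_one_sub_X_smul_zero _, hcoeff_one, fun n hn => ?_, ?_⟩
  · rw [X_dvd_iff, coeff_zero_eq_eval_zero, hcoeff, coeff_sub, coeff_one, coeff_X]
    simp [show n ≠ 0 by omega, show 1 ≠ n by omega]
  · rw [trace_Umat, ← neg_add', dvd_neg]
    exact hcoeff_one

/-- Writing `P^{(k)}(X) = det(I - X·U^{(k)}) = Σ a_n X^n ∈ 𝔽_q[t][X]`, one has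
`a_0 = 1`, `a_1 ≡ -1 (mod t)`, and `t ∣ a_n` for every `n ≥ 2`; in particular the trace
of `U^{(k)}` is congruent to `1` modulo `t`. -/
theorem Pser_coeff_mod_t
    (p q : ℕ) (hp : p.Prime) (hq : ∃ e : ℕ, 1 ≤ e ∧ q = p ^ e)
    (F : Type) [Field F] [Fintype F] (hF : Fintype.card F = q)
    (k : ℕ) (hk : 2 ≤ k) :
    (Pser F q k).coeff 0 = 1 ∧
    (Polynomial.X : Polynomial F) ∣ ((Pser F q k).coeff 1 + 1) ∧
    (∀ n : ℕ, 2 ≤ n → (Polynomial.X : Polynomial F) ∣ (Pser F q k).coeff n) ∧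
    (Polynomial.X : Polynomial F) ∣ (Matrix.trace (Umat F q k) - 1) :=
  Pser_coeff_mod_t_general q F k hk

end DrinfeldGM
end

section
/- Let p be a prime, q > 1 a power of p, and k ≥ 2, m ≥ 1 integers. Let V ∈ M_{k+p^m−1}(𝔽_q[[t]]) be any glissando matrix such that every entry of U^{(k+p^m)} − V is divisible by t^{p^m}. Write det(I − X·U^{(k+p^m)}) = Σ_n a_n^{(k+p^m)} X^n and det(I − X·V) = Σ_n ã_n X^n. Then for every integer n with 0 ≤ n ≤ k+p^m−1, one has v_t(a_n^{(k+p^m)} − ã_n) ≥ p^m + Σ_{l=1}^{n−1} min(l−1, p^m), where v_t is the t-adic valuation on 𝔽_q[[t]] with v_t(t) = 1 and v_t(0) = +∞. -/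
open Polynomial

noncomputable section DrinfeldGM

/-!
Replacing the columns of `I - X·U` by those of `I - X·V` one at a time telescopes `a_n - ã_n`
into a sum of `X^n`-coefficients of determinants in which one column `r` is the difference
column: it has no constant term and its `X`-part is divisible by `t^{p^m}`, while by the
glissando shape of `U` and `V` the `X`-part of every other column `j` is divisible by `t^j`.
Each monomial of degree `n` takes its `X`-part from `n` distinct columns, one of them `r`, so it
is divisible by `t^{p^m + 0 + 1 + ⋯ + (n-2)}`, which is at least the stated bound.
-/

open Finset

theorem Finset.sum_range_card_le_sum (T : Finset ℕ) : ∑ i ∈ range #T, i ≤ ∑ x ∈ T, x := by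
  induction T using Finset.induction_on_max with
  | empty => simp
  | insert a s hlt ih =>
    have ha : a ∉ s := fun h => lt_irrefl a (hlt a h)
    have hcard : #s ≤ a := by
      simpa using card_le_card fun x hx => mem_range.mpr (hlt x hx)
    rw [card_insert_of_notMem ha, sum_range_succ, sum_insert ha]
    omega

theorem Fin.sum_range_card_le_sum_val {N : ℕ} (S : Finset (Fin N)) :
    ∑ i ∈ range #S, i ≤ ∑ j ∈ S, (j : ℕ) := by
  simpa using sum_range_card_le_sum (S.map Fin.valEmbedding)

theorem Nat.sum_Icc_min_le_sum_range (n c : ℕ) :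
    ∑ l ∈ Icc 1 (n - 1), min (l - 1) c ≤ ∑ i ∈ range (n - 1), i := by
  refine (sum_le_sum fun l _ => min_le_left _ _).trans_eq ?_
  rw [← Ico_add_one_right_eq_Icc, sum_Ico_eq_sum_range]
  simp

theorem Polynomial.coeff_prod_C_add_C_mul_X {R ι : Type*} [CommRing R] [DecidableEq ι]
    (s : Finset ι) (b c : ι → R) (n : ℕ) :
    (∏ j ∈ s, (C (b j) + C (c j) * X)).coeff n =
      ∑ S ∈ s.powerset with #S = n, (∏ j ∈ S, c j) * ∏ j ∈ s \ S, b j := by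
  simp_rw [add_comm (C _), prod_add, finsetSum_coeff, sum_filter]
  refine sum_congr rfl fun S _ => ?_
  rw [prod_mul_distrib, prod_const, ← map_prod, ← map_prod, mul_right_comm, ← map_mul,
    coeff_C_mul_X_pow]
  exact if_congr eq_comm rfl rfl

theorem Matrix.dvd_coeff_det_of_dvd_col {R ι : Type*} [CommRing R] [Fintype ι] [DecidableEq ι]
    (b c : Matrix ι ι R) (x : R) (w : ι → ℕ) (j₀ : ι) (e n : ℕ)
    (hb : ∀ i, b i j₀ = 0) (hc : ∀ i j, x ^ w j ∣ c i j)
    (he : ∀ S : Finset ι, #S = n → j₀ ∈ S → e ≤ ∑ j ∈ S, w j) :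
    x ^ e ∣ (Matrix.of fun i j => C (b i j) + C (c i j) * X).det.coeff n := by
  rw [Matrix.det_apply, finsetSum_coeff]
  refine dvd_sum fun σ _ => ?_
  rw [Units.smul_def, coeff_smul, zsmul_eq_mul]
  refine Dvd.dvd.mul_left ?_ _
  simp only [Matrix.of_apply, coeff_prod_C_add_C_mul_X]
  refine dvd_sum fun S hS => ?_
  obtain ⟨-, hcard⟩ := mem_filter.mp hS
  by_cases hj₀ : j₀ ∈ S
  · calc x ^ e ∣ x ^ ∑ j ∈ S, w j := pow_dvd_pow x (he S hcard hj₀)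
      _ = ∏ j ∈ S, x ^ w j := (prod_pow_eq_pow_sum S w x).symm
      _ ∣ ∏ j ∈ S, c (σ j) j := prod_dvd_prod_of_dvd _ _ fun j _ => hc (σ j) j
      _ ∣ _ := dvd_mul_right _ _
  · have hzero : ∏ j ∈ univ \ S, b (σ j) j = 0 :=
      prod_eq_zero (mem_sdiff.mpr ⟨mem_univ j₀, hj₀⟩) (hb (σ j₀))
    simp [hzero]

theorem Matrix.det_sub_det_eq_sum_det_updateCol {R : Type*} [CommRing R] {N : ℕ}
    (A B : Matrix (Fin N) (Fin N) R) :
    A.det - B.det = ∑ r : Fin N,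
      ((of fun i j => if j < r then A i j else B i j).updateCol r fun i => A i r - B i r).det := by
  let H : ℕ → Matrix (Fin N) (Fin N) R := fun r =>
    of fun i j => if (j : ℕ) < r then A i j else B i j
  have hstep (r : Fin N) : (H (r + 1)).det - (H r).det =
      ((H r).updateCol r fun i => A i r - B i r).det := by
    have hA : H (r + 1) = (H r).updateCol r fun i => A i r := by
      ext i j
      rcases eq_or_ne j r with rfl | hj
      · simp [H]
      · have : (j : ℕ) < r + 1 ↔ (j : ℕ) < r := by have := Fin.val_ne_of_ne hj; omega
        simp [H, updateCol_ne hj, this]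
    have hB : (H r).updateCol r (fun i => B i r) = H r := by
      rw [← updateCol_eq_self (H r) r]
      simp [H]
    have hsum : ((fun i => A i r - B i r) + fun i => B i r) = fun i => A i r := by
      ext; simp
    rw [hA, ← hB, updateCol_idem, updateCol_idem, ← hsum, det_updateCol_add, add_sub_cancel_right]
  calc A.det - B.det = (H N).det - (H 0).det := by simp [H]; rfl
    _ = ∑ r ∈ range N, ((H (r + 1)).det - (H r).det) :=
      (sum_range_sub (fun r => (H r).det) N).symm
    _ = _ := by
      rw [← Fin.sum_univ_eq_sum_range (fun r => (H (r + 1)).det - (H r).det)]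
      simp only [hstep]
      rfl

theorem Matrix.one_sub_X_smul_map_C_apply {R n : Type*} [CommRing R] [DecidableEq n]
    (M : Matrix n n R) (i j : n) :
    (1 - (X : R[X]) • M.map C) i j = C ((1 : Matrix n n R) i j) + C (-M i j) * X := by
  rw [sub_apply, smul_apply, map_apply, smul_eq_mul, map_neg, one_apply, one_apply]
  split_ifs <;> simp only [map_one, map_zero] <;> ring

theorem Matrix.dvd_coeff_charpolyRev_sub {R : Type*} [CommRing R] {N : ℕ}
    (A B : Matrix (Fin N) (Fin N) R) (x : R) (e n : ℕ)
    (hA : ∀ i j : Fin N, x ^ (j : ℕ) ∣ A i j) (hB : ∀ i j : Fin N, x ^ (j : ℕ) ∣ B i j)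
    (hAB : ∀ i j, x ^ e ∣ A i j - B i j) :
    x ^ (e + ∑ i ∈ range (n - 1), i) ∣ A.charpolyRev.coeff n - B.charpolyRev.coeff n := by
  rw [← coeff_sub, charpolyRev, charpolyRev, det_sub_det_eq_sum_det_updateCol, finsetSum_coeff]
  refine dvd_sum fun r _ => ?_
  let b : Matrix (Fin N) (Fin N) R := fun i j =>
    if j = r then 0 else (1 : Matrix (Fin N) (Fin N) R) i j
  let c : Matrix (Fin N) (Fin N) R := fun i j =>
    if j < r then -A i j else if j = r then B i j - A i j else -B i j
  have hmix : ((of fun i j => if j < r then (1 - (X : R[X]) • A.map C) i j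
      else (1 - (X : R[X]) • B.map C) i j).updateCol r
        fun i => (1 - (X : R[X]) • A.map C) i r - (1 - (X : R[X]) • B.map C) i r) =
      of fun i j => C (b i j) + C (c i j) * X := by
    refine Matrix.ext fun i j => ?_
    simp only [updateCol_apply, of_apply, one_sub_X_smul_map_C_apply, b, c]
    rcases lt_trichotomy j r with h | rfl | h
    · simp [h, h.ne]
    · simp only [if_true, lt_irrefl, if_false, map_zero, map_sub, map_neg]
      ring
    · simp [lt_asymm h, h.ne']
  rw [hmix]
  refine dvd_coeff_det_of_dvd_col b c x (Function.update (fun j : Fin N => (j : ℕ)) r e) r _ n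
    (fun i => by simp [b]) (fun i j => ?_) (fun S hcard hr => ?_)
  · rcases lt_trichotomy j r with h | rfl | h
    · simpa [c, h, h.ne] using hA i j
    · simpa [c] using (hAB i j).neg_right
    · simpa [c, lt_asymm h, h.ne'] using hB i j
  · rw [← add_sum_erase S _ hr, Function.update_self]
    have herase : ∑ j ∈ S.erase r, Function.update (fun j : Fin N => (j : ℕ)) r e j =
        ∑ j ∈ S.erase r, (j : ℕ) :=
      sum_congr rfl fun j hj => Function.update_of_ne (ne_of_mem_erase hj) _ _
    have := Fin.sum_range_card_le_sum_val (S.erase r)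
    rw [card_erase_of_mem hr, hcard] at this
    omega

theorem X_pow_dvd_Uent (F : Type*) [Field F] (q k i j : ℕ) : (X : F[X]) ^ j ∣ Uent F q k i j := by
  unfold Uent
  split_ifs
  · exact dvd_mul_of_dvd_left (by rw [neg_pow]; exact dvd_mul_left _ _) _
  · exact (dvd_mul_right _ _).neg_right
  · exact dvd_zero _

theorem X_pow_dvd_polyToPS_Umat (F : Type*) [Field F] (q k : ℕ) (i j : Fin (k - 1)) :
    (PowerSeries.X : PowerSeries F) ^ (j : ℕ) ∣ (Umat F q k).map (polyToPS F) i j := by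
  simpa [polyToPS, Umat] using map_dvd (polyToPS F) (X_pow_dvd_Uent F q k i j)

theorem Glissando.X_pow_dvd {F : Type*} [Field F] {m n : ℕ}
    {B : Matrix (Fin m) (Fin n) (PowerSeries F)} (hB : Glissando B) (i : Fin m) (j : Fin n) :
    (PowerSeries.X : PowerSeries F) ^ (j : ℕ) ∣ B i j := by
  obtain ⟨c, hc⟩ := hB i j
  exact hc ▸ dvd_mul_left _ _

theorem charSeries_perturbation_dvd_general
    (p q : ℕ)
    (F : Type) [Field F]
    (k m : ℕ)
    (V : Matrix (Fin (k + p ^ m - 1)) (Fin (k + p ^ m - 1)) (PowerSeries F))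
    (hV : Glissando V)
    (hdvd : ∀ i j, (PowerSeries.X : PowerSeries F) ^ (p ^ m) ∣
      (((Umat F q (k + p ^ m)).map (polyToPS F)) i j - V i j))
    (n : ℕ) :
    (PowerSeries.X : PowerSeries F) ^
        (p ^ m + ∑ l ∈ Finset.Icc 1 (n - 1), min (l - 1) (p ^ m)) ∣
      ((charSeriesPS F ((Umat F q (k + p ^ m)).map (polyToPS F))).coeff n -
        (charSeriesPS F V).coeff n) :=
  (pow_dvd_pow _ (Nat.add_le_add_left (Nat.sum_Icc_min_le_sum_range n (p ^ m)) _)).trans <|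
    Matrix.dvd_coeff_charpolyRev_sub _ V _ _ n (X_pow_dvd_polyToPS_Umat F q _) hV.X_pow_dvd hdvd

/-- Perturbation bound: let `V` be any glissando matrix of size `k+p^m-1` over `𝔽_q[[t]]`
with all entries of `U^{(k+p^m)} - V` divisible by `t^{p^m}`, and write
`det(I - X·U^{(k+p^m)}) = Σ a_n X^n`, `det(I - X·V) = Σ ã_n X^n`.  Then for every
`0 ≤ n ≤ k+p^m-1` one has `v_t(a_n - ã_n) ≥ p^m + Σ_{l=1}^{n-1} min(l-1, p^m)`. -/
theorem charSeries_perturbation_dvd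
    (p q : ℕ) (hp : p.Prime) (hq : ∃ e : ℕ, 1 ≤ e ∧ q = p ^ e)
    (F : Type) [Field F] [Fintype F] (hF : Fintype.card F = q)
    (k m : ℕ) (hk : 2 ≤ k) (hm : 1 ≤ m)
    (V : Matrix (Fin (k + p ^ m - 1)) (Fin (k + p ^ m - 1)) (PowerSeries F))
    (hV : Glissando V)
    (hdvd : ∀ i j, (PowerSeries.X : PowerSeries F) ^ (p ^ m) ∣
      (((Umat F q (k + p ^ m)).map (polyToPS F)) i j - V i j))
    (n : ℕ) (hn : n ≤ k + p ^ m - 1) :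
    (PowerSeries.X : PowerSeries F) ^
        (p ^ m + ∑ l ∈ Finset.Icc 1 (n - 1), min (l - 1) (p ^ m)) ∣
      ((charSeriesPS F ((Umat F q (k + p ^ m)).map (polyToPS F))).coeff n -
        (charSeriesPS F V).coeff n) :=
  charSeries_perturbation_dvd_general p q F k m V hV hdvd n

end DrinfeldGM
end

section
/- Let p be a prime, q > 1 a power of p and k ≥ 2 an integer. Let D' be any glissando square matrix over 𝔽_q[[t]] and put P̃(X) = P^{(k)}(X) · det(I − t^{k−1} X D') ∈ 𝔽_q[[t]][X], where P^{(k)}(X) = det(I − X·U^{(k)}). Then for every root λ ∈ K̄ of P̃ with v(λ) > −(k−1), the multiplicity of λ as a root of P̃ equals its multiplicity as a root of P^{(k)}; in other words, the multiset of roots of P̃ in K̄ of valuation greater than −(k−1) coincides (with multiplicity) with that of P^{(k)}. (Equivalently, the part of the Newton polygon of P̃ of slope less than k−1 agrees with that of P^{(k)}.) -/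
open Polynomial

/-!
For `μ = t^{k-1} λ`, a root `λ` of `det(I - t^{k-1} X D')` makes `μ⁻¹` a root of the
characteristic polynomial of `D'`, hence integral over `𝔽_q[[t]]`, i.e. `v(μ) ≤ 0`. This forces
`v(λ) ≤ -(k-1)`, so in the window `v(λ) > -(k-1)` the second factor of `P̃` does not vanish and
contributes nothing to root multiplicities. The valuation is handled through its integrality
definition: if `λ^b / t^a` and `μ⁻¹` were both integral with `a + (k-1) b > 0`, a product of their
powers would be a positive power of `t⁻¹`, making `t⁻¹` integral over the integrally closed
ring `𝔽_q[[t]]`.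
-/

open Polynomial

namespace Matrix

variable {n : Type*} [Fintype n] [DecidableEq n] {R : Type*} [CommRing R]

theorem aeval_charpolyRev {A : Type*} [CommRing A] [Algebra R A] (M : Matrix n n R) (x : A) :
    aeval x M.charpolyRev = (1 - x • M.map (algebraMap R A)).det := by
  rw [charpolyRev, AlgHom.map_det]
  congr 1
  ext i j
  simp [one_apply, Algebra.commutes, apply_ite]

theorem aeval_charpolyRev_smul {A : Type*} [CommRing A] [Algebra R A] (c : R)
    (M : Matrix n n R) (x : A) :
    aeval x (c • M).charpolyRev = aeval (algebraMap R A c * x) M.charpolyRev := by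
  rw [aeval_charpolyRev, aeval_charpolyRev, map_smul' _ _ _ (map_mul _), smul_smul, mul_comm]

theorem map_charpolyRev_ne_zero {S : Type*} [CommRing S] [Nontrivial S] (M : Matrix n n R)
    (f : R →+* S) : M.charpolyRev.map f ≠ 0 := fun h => by
  simpa [coeff_zero_eq_eval_zero] using congrArg (coeff · 0) h

theorem isIntegral_inv_of_aeval_charpolyRev_eq_zero {L : Type*} [Field L] [Algebra R L]
    (M : Matrix n n R) {x : L} (hx : aeval x M.charpolyRev = 0) : IsIntegral R x⁻¹ := by
  have hx0 : x ≠ 0 := by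
    rintro rfl
    simp [aeval_def, eval₂_at_zero, coeff_zero_eq_eval_zero] at hx
  refine ⟨M.charpoly, M.charpoly_monic, ?_⟩
  let := invertibleOfNonzero (inv_ne_zero hx0)
  rw [← eval₂_reverse_eq_zero_iff, invOf_eq_inv, inv_inv, reverse_charpoly]
  exact hx

end Matrix

theorem not_isIntegral_inv_algebraMap {R K L : Type*} [CommRing R] [IsDomain R]
    [IsIntegrallyClosed R] [Field K] [Algebra R K] [IsFractionRing R K] [Field L] [Algebra K L]
    [Algebra R L] [IsScalarTower R K L] {a : R} (ha₀ : a ≠ 0) (ha : ¬IsUnit a) :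
    ¬IsIntegral R (algebraMap R L a)⁻¹ := by
  intro h
  rw [IsScalarTower.algebraMap_apply R K L, ← map_inv₀] at h
  obtain ⟨b, hb⟩ := IsIntegrallyClosed.isIntegral_iff.mp h.tower_bot_of_field
  have ha₀' : algebraMap R K a ≠ 0 := (map_ne_zero_iff _ (IsFractionRing.injective R K)).mpr ha₀
  refine ha (IsUnit.of_mul_eq_one b (IsFractionRing.injective R K ?_))
  rw [map_mul, hb, mul_inv_cancel₀ ha₀', map_one]

section LaurentSeries

variable {F : Type} [Field F]

theorem integralPS_iff {x : AlgebraicClosure (LaurentSeries F)} :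
    IntegralPS F x ↔ IsIntegral (PowerSeries F) x := Iff.rfl

theorem tbar_ne_zero : tbar F ≠ 0 := by
  simp [tbar, psToKbar]

theorem charSeriesTw_eq_charpolyRev {m : ℕ} (l : ℕ) (B : Matrix (Fin m) (Fin m) (PowerSeries F)) :
    charSeriesTw F l B = ((PowerSeries.X : PowerSeries F) ^ l • B).charpolyRev := by
  rw [charSeriesTw, Matrix.charpolyRev]
  congr 2
  ext i j
  simp [mul_comm, mul_left_comm]

theorem not_integralPS_inv_tbar_pow_mul {lam : AlgebraicClosure (LaurentSeries F)} {α : ℚ}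
    (hval : HasVal F lam α) {l : ℕ} (hα : -(l : ℚ) < α) :
    ¬IntegralPS F (tbar F ^ l * lam)⁻¹ := by
  obtain ⟨hlam, a, b, hb, rfl, hint, -⟩ := hval
  lift b to ℕ using hb.le
  have hpos : 0 < (l * b : ℤ) + a := by
    rw [lt_div_iff₀ (by exact_mod_cast hb)] at hα
    push_cast at hα
    exact_mod_cast (by linarith : (0 : ℚ) < l * b + a)
  obtain ⟨N, hN⟩ : ∃ N : ℕ, (N : ℤ) = l * b + a := ⟨_, Int.toNat_of_nonneg hpos.le⟩
  have hexp : tbar F ^ (l * b) * tbar F ^ a = tbar F ^ N := by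
    rw [← zpow_natCast, ← zpow_natCast, ← zpow_add₀ tbar_ne_zero, hN]
    push_cast
    rfl
  have hprod : (tbar F ^ l * lam)⁻¹ ^ b * (lam ^ (b : ℤ) / tbar F ^ a) = (tbar F)⁻¹ ^ N := by
    rw [inv_pow (tbar F) N, ← hexp, zpow_natCast, pow_mul, inv_pow, mul_pow]
    field_simp
  rw [integralPS_iff] at hint ⊢
  intro h
  have ht : IsIntegral (PowerSeries F) (tbar F)⁻¹ :=
    IsIntegral.of_pow (n := N) (by omega) (hprod ▸ (h.pow b).mul hint)
  exact not_isIntegral_inv_algebraMap (K := LaurentSeries F) PowerSeries.X_ne_zero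
    PowerSeries.X_prime.not_isUnit ht

theorem eval_map_charSeriesTw_ne_zero {m : ℕ} (l : ℕ) (B : Matrix (Fin m) (Fin m) (PowerSeries F))
    {lam : AlgebraicClosure (LaurentSeries F)} {α : ℚ} (hval : HasVal F lam α)
    (hα : -(l : ℚ) < α) : ((charSeriesTw F l B).map (psToKbar F)).eval lam ≠ 0 := fun h => by
  rw [psToKbar, ← IsScalarTower.algebraMap_eq, eval_map_algebraMap, charSeriesTw_eq_charpolyRev,
    Matrix.aeval_charpolyRev_smul, map_pow] at h
  exact not_integralPS_inv_tbar_pow_mul hval hα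
    (integralPS_iff.mpr (B.isIntegral_inv_of_aeval_charpolyRev_eq_zero h))

end LaurentSeries

theorem newton_polygon_window_general
    (q : ℕ) (F : Type) [Field F] (k : ℕ)
    (r : ℕ) (D' : Matrix (Fin r) (Fin r) (PowerSeries F))
    (lam : AlgebraicClosure (LaurentSeries F))
    (α : ℚ) (hval : HasVal F lam α) (hα : -((k : ℚ) - 1) < α) :
    ((Pser F q k).map (polyToKbar F) *
        (charSeriesTw F (k - 1) D').map (psToKbar F)).rootMultiplicity lam =
      ((Pser F q k).map (polyToKbar F)).rootMultiplicity lam := by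
  have hne : (Pser F q k).map (polyToKbar F) * (charSeriesTw F (k - 1) D').map (psToKbar F) ≠ 0 :=
    mul_ne_zero ((Umat F q k).map_charpolyRev_ne_zero _)
      (by rw [charSeriesTw_eq_charpolyRev]; exact Matrix.map_charpolyRev_ne_zero _ _)
  have hα' : -((k - 1 : ℕ) : ℚ) < α := by
    refine lt_of_le_of_lt ?_ hα
    rcases k with _ | k <;> simp
  rw [rootMultiplicity_mul hne, rootMultiplicity_eq_zero
    (eval_map_charSeriesTw_ne_zero (k - 1) D' hval hα'), add_zero]

/-- Let `D'` be any glissando square matrix over `𝔽_q[[t]]` and put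
`P̃(X) = P^{(k)}(X) · det(I - t^{k-1} X D')`, where `P^{(k)}(X) = det(I - X·U^{(k)})`.
Then for every root `λ ∈ K̄` of `P̃` with `v(λ) > -(k-1)`, the multiplicity of `λ` as a
root of `P̃` equals its multiplicity as a root of `P^{(k)}`; i.e. the part of the Newton
polygon of `P̃` of slope less than `k-1` agrees with that of `P^{(k)}`. -/
theorem newton_polygon_window
    (p q : ℕ) (hp : p.Prime) (hq : ∃ e : ℕ, 1 ≤ e ∧ q = p ^ e)
    (F : Type) [Field F] [Fintype F] (hF : Fintype.card F = q)
    (k : ℕ) (hk : 2 ≤ k)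
    (r : ℕ) (D' : Matrix (Fin r) (Fin r) (PowerSeries F)) (hD' : Glissando D')
    (lam : AlgebraicClosure (LaurentSeries F))
    (hroot : ((Pser F q k).map (polyToKbar F) *
      (charSeriesTw F (k - 1) D').map (psToKbar F)).eval lam = 0)
    (α : ℚ) (hval : HasVal F lam α) (hα : -((k : ℚ) - 1) < α) :
    ((Pser F q k).map (polyToKbar F) *
        (charSeriesTw F (k - 1) D').map (psToKbar F)).rootMultiplicity lam =
      ((Pser F q k).map (polyToKbar F)).rootMultiplicity lam :=
  newton_polygon_window_general q F k r D' lam α hval hα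
end
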